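/- Let $n, s \ge 1$ and let $b \in L_1(\mathbb{R}^d)$ satisfy $\int_Q b = 0$ for every dyadic cube $Q$ of side length $2^{-(n+s)}$. Then for every integer $k < n$, $\|M_k b\|_1 \le C_d \, 2^{-s} \, 2^{k-n} \|b\|_1$, where $M_k b(x) = \frac{1}{|B(0,2^{-k})|}\int_{B(0,2^{-k})} b(x+y)\,dy$. -/

import Mathlib

/-!
Cubes of side `2^{-(n+s)}` lying inside `B(x, 2^{-k})` contribute nothing to `∫_B b`, and those
meeting the sphere `∂B(x, 2^{-k})` lie in the shell of width `δ = √d · 2^{-(n+s)}` inside it, so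
`|M_k b(x)|` is at most the average of `|b|` over that shell. Integrating in `x` (Tonelli and
translation invariance) bounds `‖M_k b‖₁` by `|shell| / |ball| · ‖b‖₁ ≤ d δ 2^k ‖b‖₁`.
-/

open MeasureTheory Metric

noncomputable section

/-- Euclidean space `ℝ^d`. -/
abbrev Euc (d : ℕ) := EuclideanSpace ℝ (Fin d)

/-- The standard dyadic cube at scale `n` (side length `2^{-n}`) indexed by `m`. -/
def dyadicCube (d : ℕ) (n : ℤ) (m : Fin d → ℤ) : Set (Euc d) :=
  {y | ∀ j, (m j : ℝ) * 2 ^ (-n) ≤ y j ∧ y j < ((m j : ℝ) + 1) * 2 ^ (-n)}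

/-- Index of the dyadic cube at scale `n` containing `x`. -/
def dyadicIdx (d : ℕ) (n : ℤ) (x : Euc d) : Fin d → ℤ :=
  fun j => ⌊(2 : ℝ) ^ n * x j⌋

/-- Dyadic conditional expectation at scale `2^{-n}`. -/
def Ek (d : ℕ) (n : ℤ) (h : Euc d → ℝ) (x : Euc d) : ℝ :=
  (2 : ℝ) ^ (n * d) * ∫ y in dyadicCube d n (dyadicIdx d n x), h y

/-- Average over the Euclidean ball of radius `2^{-k}` centered at `x`. -/
def Mk (d : ℕ) (k : ℤ) (h : Euc d → ℝ) (x : Euc d) : ℝ :=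
  ((volume (ball (0 : Euc d) ((2 : ℝ) ^ (-k)))).toReal)⁻¹ *
    ∫ y in ball x ((2 : ℝ) ^ (-k)), h y

/-- Indices of dyadic cubes at scale `n` meeting the boundary of the ball `B(x, 2^{-k})`. -/
def bdryIdx (d : ℕ) (k n : ℤ) (x : Euc d) : Set (Fin d → ℤ) :=
  {m | (dyadicCube d n m ∩ frontier (ball x ((2 : ℝ) ^ (-k)))).Nonempty}

/-- `𝓘(B_k + x, n)`: union over boundary cubes `Q` at scale `n` of `Q ∩ B(x,2^{-k})`. -/
def Ikn (d : ℕ) (k n : ℤ) (x : Euc d) : Set (Euc d) :=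
  ⋃ m ∈ bdryIdx d k n x, dyadicCube d n m ∩ ball x ((2 : ℝ) ^ (-k))

/-- The operator `M_{k,n}`. -/
def Mkn (d : ℕ) (k n : ℤ) (h : Euc d → ℝ) (x : Euc d) : ℝ :=
  ((volume (ball (0 : Euc d) ((2 : ℝ) ^ (-k)))).toReal)⁻¹ * ∫ y in Ikn d k n x, h y

/-- The concentric dilation `iQ` of the dyadic cube at scale `n` indexed by `m`. -/
def cubeDil (d : ℕ) (i : ℕ) (n : ℤ) (m : Fin d → ℤ) : Set (Euc d) :=
  {y | ∀ j, ((m j : ℝ) + 1 / 2) * 2 ^ (-n) - (i : ℝ) * 2 ^ (-n) / 2 ≤ y j ∧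
      y j < ((m j : ℝ) + 1 / 2) * 2 ^ (-n) + (i : ℝ) * 2 ^ (-n) / 2}

open Function
open scoped ENNReal Pointwise

theorem abs_setIntegral_le_of_partition {α ι : Type*} [MeasurableSpace α] [Countable ι]
    {μ : Measure α} {P : ι → Set α} (hP : ∀ i, MeasurableSet (P i))
    (hPd : Pairwise (Disjoint on P)) (hPU : ⋃ i, P i = Set.univ) {f : α → ℝ}
    (hf : Integrable f μ) {S T : Set α} (hS : MeasurableSet S) (hT : MeasurableSet T)
    (h : ∀ i, |∫ x in P i ∩ S, f x ∂μ| ≤ ∫ x in P i ∩ T, |f x| ∂μ) :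
    |∫ x in S, f x ∂μ| ≤ ∫ x in T, |f x| ∂μ := by
  have hsum : ∀ {g : α → ℝ} {U : Set α}, MeasurableSet U → Integrable g μ →
      HasSum (fun i => ∫ x in P i ∩ U, g x ∂μ) (∫ x in U, g x ∂μ) := by
    intro g U hU hg
    have hU' : ⋃ i, P i ∩ U = U := by rw [← Set.iUnion_inter, hPU, Set.univ_inter]
    simpa only [hU'] using hasSum_integral_iUnion (fun i => (hP i).inter hU)
      (fun i j hij => (hPd hij).mono Set.inter_subset_left Set.inter_subset_left)
      (hU'.symm ▸ hg.integrableOn)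
  have hS' := hsum hS hf
  have hT' := hsum hT hf.abs
  have hsumm : Summable fun i => ‖∫ x in P i ∩ S, f x ∂μ‖ :=
    .of_nonneg_of_le (fun _ => norm_nonneg _) h hT'.summable
  rw [← hS'.tsum_eq, ← hT'.tsum_eq, ← Real.norm_eq_abs]
  exact (norm_tsum_le_tsum_norm hsumm).trans (hsumm.tsum_le_tsum h hT'.summable)

theorem IsPreconnected.subset_ball_of_disjoint_frontier {X : Type*} [PseudoMetricSpace X]
    {Q : Set X} (hQ : IsPreconnected Q) {x : X} {r : ℝ} (hmeet : (Q ∩ ball x r).Nonempty)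
    (hfr : ¬(Q ∩ frontier (ball x r)).Nonempty) :
    Q ⊆ ball x r := by
  refine hQ.subset_of_closure_inter_subset isOpen_ball hmeet fun y ⟨hyc, hyQ⟩ => ?_
  by_contra hyB
  exact hfr ⟨y, hyQ, hyc, by rwa [isOpen_ball.interior_eq]⟩

theorem abs_setIntegral_ball_le_setIntegral_shell {X ι : Type*} [PseudoMetricSpace X]
    [MeasurableSpace X] [OpensMeasurableSpace X] [Countable ι] {μ : Measure X}
    {Q : ι → Set X} (hQ : ∀ i, MeasurableSet (Q i))
    (hQd : Pairwise (Disjoint on Q)) (hQU : ⋃ i, Q i = Set.univ)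
    (hQc : ∀ i, IsPreconnected (Q i)) {δ : ℝ} (hdiam : ∀ i, ∀ y ∈ Q i, ∀ z ∈ Q i, dist y z ≤ δ)
    {b : X → ℝ} (hb : Integrable b μ) (hb0 : ∀ i, ∫ y in Q i, b y ∂μ = 0) (x : X) (r : ℝ) :
    |∫ y in ball x r, b y ∂μ| ≤ ∫ y in ball x r \ ball x (r - δ), |b y| ∂μ := by
  refine abs_setIntegral_le_of_partition hQ hQd hQU hb measurableSet_ball
    (measurableSet_ball.diff measurableSet_ball) fun i => ?_
  have hpos : 0 ≤ ∫ y in Q i ∩ (ball x r \ ball x (r - δ)), |b y| ∂μ :=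
    setIntegral_nonneg ((hQ i).inter (measurableSet_ball.diff measurableSet_ball))
      fun _ _ => abs_nonneg _
  by_cases hfr : (Q i ∩ frontier (ball x r)).Nonempty
  · obtain ⟨z, hzQ, hzS⟩ := hfr
    have hz : dist z x = r := mem_sphere.1 (frontier_ball_subset_sphere hzS)
    have hshell : Q i ∩ ball x r ⊆ Q i ∩ (ball x r \ ball x (r - δ)) := by
      rintro y ⟨hyQ, hyB⟩
      refine ⟨hyQ, hyB, fun hy => ?_⟩
      have := dist_triangle z y x
      linarith [mem_ball.1 hy, hdiam i y hyQ z hzQ, dist_comm z y]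
    calc |∫ y in Q i ∩ ball x r, b y ∂μ| ≤ ∫ y in Q i ∩ ball x r, |b y| ∂μ :=
          abs_integral_le_integral_abs
      _ ≤ _ := setIntegral_mono_set hb.abs.integrableOn
          (.of_forall fun _ => abs_nonneg _) hshell.eventuallyLE
  by_cases hmeet : (Q i ∩ ball x r).Nonempty
  · rwa [Set.inter_eq_left.2 ((hQc i).subset_ball_of_disjoint_frontier hmeet hfr), hb0,
      abs_zero]
  · rwa [Set.not_nonempty_iff_eq_empty.1 hmeet, Measure.restrict_empty, integral_zero_measure,
      abs_zero]

section Translate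

variable {G : Type*} [MeasurableSpace G] [AddCommGroup G] [MeasurableAdd₂ G] [MeasurableNeg G]
  {μ : Measure G} [SFinite μ] [μ.IsAddLeftInvariant] [μ.IsNegInvariant]

theorem lintegral_lintegral_vadd_set {S : Set G} (hS : MeasurableSet S) {g : G → ℝ≥0∞}
    (hg : AEMeasurable g μ) :
    ∫⁻ x, ∫⁻ y in x +ᵥ S, g y ∂μ ∂μ = μ S * ∫⁻ y, g y ∂μ := by
  have hind : ∀ x y, (x +ᵥ S).indicator g y = S.indicator 1 (y - x) * g y := by
    intro x y
    by_cases h : y - x ∈ S <;>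
      simp [Set.indicator, h, Set.mem_vadd_set_iff_neg_vadd_mem, neg_add_eq_sub]
  have hSm : Measurable (S.indicator (1 : G → ℝ≥0∞)) := measurable_one.indicator hS
  calc ∫⁻ x, ∫⁻ y in x +ᵥ S, g y ∂μ ∂μ
      = ∫⁻ x, ∫⁻ y, S.indicator 1 (y - x) * g y ∂μ ∂μ := by
        simp_rw [← hind]
        exact lintegral_congr fun x => (lintegral_indicator (hS.const_vadd x) g).symm
    _ = ∫⁻ y, ∫⁻ x, S.indicator 1 (y - x) * g y ∂μ ∂μ :=
        lintegral_lintegral_swap ((hSm.comp (measurable_snd.sub measurable_fst)).aemeasurable.mul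
          hg.comp_snd)
    _ = ∫⁻ y, μ S * g y ∂μ := by
        refine lintegral_congr fun y => ?_
        rw [lintegral_mul_const (g y) (f := fun x => S.indicator 1 (y - x))
            (hSm.comp (measurable_const.sub measurable_id)),
          lintegral_sub_left_eq_self (S.indicator 1) y, lintegral_indicator_one hS]
    _ = μ S * ∫⁻ y, g y ∂μ := lintegral_const_mul'' _ hg

theorem integral_abs_le_of_abs_le_setIntegral_vadd {F b : G → ℝ} (hb : Integrable b μ)
    {S : Set G} (hS : MeasurableSet S) (hSfin : μ S ≠ ⊤) {c : ℝ} (hc : 0 ≤ c)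
    (hF : ∀ x, |F x| ≤ c * ∫ y in x +ᵥ S, |b y| ∂μ) :
    ∫ x, |F x| ∂μ ≤ c * (μ S).toReal * ∫ x, |b x| ∂μ := by
  by_cases hFi : Integrable (fun x => |F x|) μ
  swap
  · rw [integral_undef hFi]
    have : 0 ≤ ∫ x, |b x| ∂μ := integral_nonneg fun _ => abs_nonneg _
    positivity
  have hg : AEMeasurable (fun y => ENNReal.ofReal |b y|) μ := hb.abs.aemeasurable.ennreal_ofReal
  have hlint : ∀ U : Set G, ENNReal.ofReal (∫ y in U, |b y| ∂μ) = ∫⁻ y in U, .ofReal |b y| ∂μ :=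
    fun U => ofReal_integral_eq_lintegral_ofReal hb.abs.integrableOn
      (.of_forall fun _ => abs_nonneg _)
  have hpoint : ∀ x, ENNReal.ofReal |F x| ≤ .ofReal c * ∫⁻ y in x +ᵥ S, .ofReal |b y| ∂μ := by
    intro x
    rw [← hlint, ← ENNReal.ofReal_mul hc]
    exact ENNReal.ofReal_le_ofReal (hF x)
  calc ∫ x, |F x| ∂μ = (∫⁻ x, .ofReal |F x| ∂μ).toReal :=
        integral_eq_lintegral_of_nonneg_ae (.of_forall fun _ => abs_nonneg _)
          hFi.aestronglyMeasurable
    _ ≤ (.ofReal c * (μ S * ∫⁻ y, .ofReal |b y| ∂μ)).toReal := by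
        refine ENNReal.toReal_mono ?_ ?_
        · exact ENNReal.mul_ne_top ENNReal.ofReal_ne_top
            (ENNReal.mul_ne_top hSfin hb.abs.lintegral_lt_top.ne)
        · rw [← lintegral_lintegral_vadd_set hS hg,
            ← lintegral_const_mul' _ _ ENNReal.ofReal_ne_top]
          exact lintegral_mono hpoint
    _ = c * (μ S).toReal * ∫ x, |b x| ∂μ := by
        rw [ENNReal.toReal_mul, ENNReal.toReal_mul, ENNReal.toReal_ofReal hc,
          integral_eq_lintegral_of_nonneg_ae (.of_forall fun _ => abs_nonneg _)
            hb.abs.aestronglyMeasurable, mul_assoc]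

end Translate

/-- Bernoulli's inequality `(1 - δ/r)^d ≥ 1 - dδ/r` bounds the volume of the shell. -/
theorem addHaar_ball_diff_ball_le {E : Type*} [NormedAddCommGroup E] [NormedSpace ℝ E]
    [MeasurableSpace E] [BorelSpace E] [FiniteDimensional ℝ E] [Nontrivial E] (μ : Measure E)
    [μ.IsAddHaarMeasure] (x : E) {r δ : ℝ} (hr : 0 < r) (hδ : 0 ≤ δ) :
    μ (ball x r \ ball x (r - δ)) ≤
      ENNReal.ofReal (Module.finrank ℝ E * δ / r) * μ (ball x r) := by
  set d := Module.finrank ℝ E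
  have hd : (1 : ℝ) ≤ d := Nat.one_le_cast.2 Module.finrank_pos
  rcases le_or_gt r δ with hrδ | hδr
  · refine (measure_mono Set.sdiff_subset).trans (le_mul_of_one_le_left' ?_)
    rw [ENNReal.one_le_ofReal, le_div_iff₀ hr]
    nlinarith
  have hpow : r ^ d - (r - δ) ^ d ≤ d * δ / r * r ^ d := by
    have := one_add_mul_le_pow (a := -(δ / r)) (by linarith [(div_lt_one hr).2 hδr]) d
    have hr' : (r - δ) ^ d = (1 + -(δ / r)) ^ d * r ^ d := by
      rw [← mul_pow]; congr 1; field_simp; ring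
    rw [hr']
    have : d * δ / r * r ^ d = d * (δ / r) * r ^ d := by ring
    nlinarith [pow_pos hr d]
  rw [measure_sdiff (ball_subset_ball (by linarith)) measurableSet_ball.nullMeasurableSet
      measure_ball_lt_top.ne, Measure.addHaar_ball μ x hr.le,
    Measure.addHaar_ball μ x (by linarith), ← ENNReal.sub_mul fun _ _ => measure_ball_lt_top.ne,
    ← ENNReal.ofReal_sub _ (by positivity), ← mul_assoc, ← ENNReal.ofReal_mul (by positivity)]
  gcongr

section DyadicCube

variable {d : ℕ}

theorem dyadicCube_eq_iInter_preimage (N : ℤ) (m : Fin d → ℤ) :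
    dyadicCube d N m = ⋂ j, (fun y : Euc d => y j) ⁻¹'
      Set.Ico ((m j : ℝ) * 2 ^ (-N)) ((m j + 1) * 2 ^ (-N)) := by
  ext y
  simp [dyadicCube]

theorem measurableSet_dyadicCube (N : ℤ) (m : Fin d → ℤ) : MeasurableSet (dyadicCube d N m) := by
  rw [dyadicCube_eq_iInter_preimage]
  exact .iInter fun j => (by fun_prop : Measurable fun y : Euc d => y j) measurableSet_Ico

theorem convex_dyadicCube (N : ℤ) (m : Fin d → ℤ) : Convex ℝ (dyadicCube d N m) := by
  rw [dyadicCube_eq_iInter_preimage]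
  exact convex_iInter fun j =>
    (convex_Ico _ _).linear_preimage (EuclideanSpace.proj j).toLinearMap

theorem mem_dyadicCube_iff {N : ℤ} {m : Fin d → ℤ} {y : Euc d} :
    y ∈ dyadicCube d N m ↔ ∀ j, ⌊(2 : ℝ) ^ N * y j⌋ = m j := by
  have h2N : (0 : ℝ) < 2 ^ N := by positivity
  refine forall_congr' fun j => ?_
  rw [Int.floor_eq_iff, zpow_neg, ← div_eq_mul_inv, ← div_eq_mul_inv, div_le_iff₀ h2N,
    lt_div_iff₀ h2N, mul_comm (y j)]

theorem pairwise_disjoint_dyadicCube (N : ℤ) : Pairwise (Disjoint on dyadicCube d N) := by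
  refine fun m m' hne => Set.disjoint_left.2 fun y hy hy' => hne (funext fun j => ?_)
  rw [← mem_dyadicCube_iff.1 hy j, mem_dyadicCube_iff.1 hy' j]

theorem iUnion_dyadicCube (N : ℤ) : ⋃ m, dyadicCube d N m = Set.univ :=
  Set.eq_univ_of_forall fun _ => Set.mem_iUnion.2 ⟨_, mem_dyadicCube_iff.2 fun _ => rfl⟩

theorem dist_le_of_mem_dyadicCube {N : ℤ} {m : Fin d → ℤ} {y z : Euc d} (hy : y ∈ dyadicCube d N m)
    (hz : z ∈ dyadicCube d N m) : dist y z ≤ √d * 2 ^ (-N) := by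
  have hcoord : ∀ j, dist (y j) (z j) ^ 2 ≤ ((2 : ℝ) ^ (-N)) ^ 2 := by
    intro j
    obtain ⟨hy₁, hy₂⟩ := hy j
    obtain ⟨hz₁, hz₂⟩ := hz j
    refine pow_le_pow_left₀ dist_nonneg ?_ 2
    rw [Real.dist_eq, abs_sub_le_iff]
    constructor <;> linarith
  calc dist y z = √(∑ j, dist (y j) (z j) ^ 2) := EuclideanSpace.dist_eq y z
    _ ≤ √(d * ((2 : ℝ) ^ (-N)) ^ 2) := by
        gcongr
        exact (Finset.sum_le_sum fun j _ => hcoord j).trans_eq (by simp)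
    _ = √d * 2 ^ (-N) := by rw [Real.sqrt_mul (Nat.cast_nonneg d), Real.sqrt_sq (by positivity)]

theorem abs_setIntegral_ball_le_of_dyadicCube {N : ℤ} {b : Euc d → ℝ}
    (hb : Integrable b volume) (hb0 : ∀ m, ∫ y in dyadicCube d N m, b y = 0) (x : Euc d)
    (r : ℝ) : |∫ y in ball x r, b y| ≤ ∫ y in ball x r \ ball x (r - √d * 2 ^ (-N)), |b y| :=
  abs_setIntegral_ball_le_setIntegral_shell (measurableSet_dyadicCube N)
    (pairwise_disjoint_dyadicCube N) (iUnion_dyadicCube N)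
    (fun m => (convex_dyadicCube N m).isPreconnected)
    (fun _ _ hy _ hz => dist_le_of_mem_dyadicCube hy hz) hb hb0 x r

end DyadicCube

/-- If `b` has vanishing integral on every dyadic cube at scale `n+s`, then for `k < n`,
`‖M_k b‖₁ ≤ C_d 2^{-s} 2^{k-n} ‖b‖₁`. -/
theorem Mk_off_diagonal_L1 (d : ℕ) (hd : 0 < d) :
    ∃ C : ℝ, 0 < C ∧ ∀ (n s : ℕ), 1 ≤ n → 1 ≤ s → ∀ b : Euc d → ℝ, Integrable b volume →
      (∀ m : Fin d → ℤ, ∫ y in dyadicCube d (n + s) m, b y = 0) →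
      ∀ k : ℤ, k < n →
        ∫ x, |Mk d k b x| ≤ C * 2 ^ (-(s : ℤ)) * 2 ^ (k - n) * ∫ x, |b x| := by
  have : Nonempty (Fin d) := ⟨⟨0, hd⟩⟩
  refine ⟨d * √d, by positivity, fun n s _ _ b hb hb0 k _ => ?_⟩
  set r : ℝ := 2 ^ (-k)
  set δ : ℝ := √d * 2 ^ (-(n + s : ℤ))
  set S : Set (Euc d) := ball 0 r \ ball 0 (r - δ)
  set V : ℝ := (volume (ball (0 : Euc d) r)).toReal
  have hr : 0 < r := by positivity
  have hV : 0 < V := ENNReal.toReal_pos (measure_ball_pos _ _ hr).ne' measure_ball_lt_top.ne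
  have hpoint : ∀ x, |Mk d k b x| ≤ V⁻¹ * ∫ y in x +ᵥ S, |b y| := by
    intro x
    rw [Mk, abs_mul, abs_of_nonneg (by positivity), Set.vadd_set_sdiff, vadd_ball_zero,
      vadd_ball_zero]
    gcongr
    exact abs_setIntegral_ball_le_of_dyadicCube hb hb0 x r
  have hS : (volume S).toReal ≤ d * δ / r * V := by
    have := addHaar_ball_diff_ball_le volume (0 : Euc d) hr (by positivity : 0 ≤ δ)
    rw [finrank_euclideanSpace_fin] at this
    have := ENNReal.toReal_mono (by finiteness) this
    rwa [ENNReal.toReal_mul, ENNReal.toReal_ofReal (by positivity)] at this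
  calc ∫ x, |Mk d k b x| ≤ V⁻¹ * (volume S).toReal * ∫ x, |b x| :=
        integral_abs_le_of_abs_le_setIntegral_vadd hb
          (measurableSet_ball.diff measurableSet_ball)
          ((measure_mono Set.sdiff_subset).trans_lt measure_ball_lt_top).ne (by positivity) hpoint
    _ ≤ V⁻¹ * (d * δ / r * V) * ∫ x, |b x| := by
        have : 0 ≤ ∫ x, |b x| := integral_nonneg fun _ => abs_nonneg _
        gcongr
    _ = d * √d * 2 ^ (-(s : ℤ)) * 2 ^ (k - n) * ∫ x, |b x| := by
        have h2 : (2 : ℝ) ^ (-(n + s : ℤ)) / r = 2 ^ (-(s : ℤ)) * 2 ^ (k - n) := by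
          rw [← zpow_sub₀ two_ne_zero, ← zpow_add₀ two_ne_zero]
          ring_nf
        rw [mul_div_assoc, mul_div_assoc, h2]
        field_simp
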